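/- arXiv:2207.03863 — 2 statements merged into one kernel-verified Lean document; each statement's English description precedes it below -/
import Mathlib

section
/- Let G = (V,E) be a weighted multigraph with |V| = n vertices and capacities {b_v}, in which the number of parallel edges between any two vertices u and v is at most min(b_u, b_v), and let M_G be a maximum-weight b-matching of G. Then the total number of edges of G satisfies |E| ≤ 2n·|M_G|, where |M_G| is the number of edges of M_G. -/
/-!
Let `M` be a maximum-weight `b`-matching. Since all weights are positive, every edge outside `M`
has an endpoint that `M` saturates, i.e. a vertex `v` with `deg_M v ≥ b v`. At most `b v` parallel
edges join `v` to each of the `n` vertices, so `deg_E v ≤ n · b v` and hence at most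
`(n - 1) · b v` edges outside `M` meet `v`. Summing over the saturated vertices, whose capacities
add up to at most `∑ deg_M = 2|M|`, gives `|E| ≤ (n - 1) · 2|M| + |M| ≤ 2n|M|`.
-/

open scoped Classical

/-- A weighted multigraph edge: two endpoints and an integer weight. -/
abbrev MEdge (V : Type*) := V × V × ℕ

variable {V : Type*}

/-- Weight of an edge. -/
def ewt (e : MEdge V) : ℕ := e.2.2

/-- Degree of a vertex in a multiset of edges: number of incident edges. -/
noncomputable def mdeg (H : Multiset (MEdge V)) (v : V) : ℕ :=
  (H.filter (fun e => e.1 = v ∨ e.2.1 = v)).card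

/-- Weighted degree of a vertex in a multiset of edges. -/
noncomputable def mwdeg (H : Multiset (MEdge V)) (v : V) : ℕ :=
  ((H.filter (fun e => e.1 = v ∨ e.2.1 = v)).map ewt).sum

/-- Total weight of a multiset of edges. -/
def mwt (M : Multiset (MEdge V)) : ℕ := (M.map ewt).sum

/-- A multiset of edges is valid (for weight bound `W`): no self-loops and
integer weights in `{1, ..., W}`. -/
def ValidEdges (W : ℕ) (E : Multiset (MEdge V)) : Prop :=
  ∀ e ∈ E, e.1 ≠ e.2.1 ∧ 1 ≤ ewt e ∧ ewt e ≤ W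

/-- The multiset of parallel edges between `u` and `v`. -/
noncomputable def par (E : Multiset (MEdge V)) (u v : V) : Multiset (MEdge V) :=
  E.filter (fun e => (e.1 = u ∧ e.2.1 = v) ∨ (e.1 = v ∧ e.2.1 = u))

/-- `M` is a `b`-matching contained in the (multi-)graph `E`. -/
def IsBMatching (E M : Multiset (MEdge V)) (b : V → ℕ) : Prop :=
  M ≤ E ∧ ∀ v, mdeg M v ≤ b v

/-- `H` is a `(β, βm)`-w-b-EDCS of the multigraph `E` with capacities `b`. -/
def IsWBEDCS (E H : Multiset (MEdge V)) (b : V → ℕ) (β βm : ℕ) : Prop :=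
  H ≤ E ∧
  (∀ e ∈ H,
    (mwdeg H e.1 : ℝ) / (b e.1) + (mwdeg H e.2.1 : ℝ) / (b e.2.1) ≤ (β : ℝ) * ewt e) ∧
  (∀ e ∈ E - H,
    (βm : ℝ) * ewt e ≤ (mwdeg H e.1 : ℝ) / (b e.1) + (mwdeg H e.2.1 : ℝ) / (b e.2.1))

theorem Multiset.sum_card_filter_eq_sum_map {α β : Type*} (s : Finset β) (p : β → α → Prop)
    [∀ b a, Decidable (p b a)] (T : Multiset α) :
    ∑ b ∈ s, (T.filter (p b)).card = (T.map fun a => (s.filter (p · a)).card).sum := by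
  induction T using Multiset.induction with
  | empty => simp
  | cons a T ih =>
    simp only [Multiset.filter_cons, Multiset.card_add, Finset.sum_add_distrib, ih,
      Multiset.map_cons, Multiset.sum_cons, Finset.card_filter, apply_ite Multiset.card,
      Multiset.card_singleton, Multiset.card_zero]

theorem Multiset.card_le_sum_card_filter {α β : Type*} {s : Finset β} {p : β → α → Prop}
    [∀ b a, Decidable (p b a)] {T : Multiset α} (h : ∀ a ∈ T, ∃ b ∈ s, p b a) :
    T.card ≤ ∑ b ∈ s, (T.filter (p b)).card := by
  rw [Multiset.sum_card_filter_eq_sum_map]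
  calc T.card = (T.map fun _ => 1).sum := by simp
    _ ≤ _ := Multiset.sum_map_le_sum_map _ _ fun a ha => by
      obtain ⟨b, hb, hpb⟩ := h a ha
      exact Finset.card_pos.2 ⟨b, Finset.mem_filter.2 ⟨hb, hpb⟩⟩

theorem mdeg_add (A B : Multiset (MEdge V)) (v : V) :
    mdeg (A + B) v = mdeg A v + mdeg B v := by
  simp only [mdeg, Multiset.filter_add, Multiset.card_add]

theorem mdeg_cons (e : MEdge V) (M : Multiset (MEdge V)) (v : V) :
    mdeg (e ::ₘ M) v = mdeg M v + if e.1 = v ∨ e.2.1 = v then 1 else 0 := by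
  rw [← Multiset.singleton_add, mdeg_add, add_comm]
  simp only [mdeg, Multiset.filter_singleton]
  split_ifs <;> rfl

theorem mwt_cons (e : MEdge V) (M : Multiset (MEdge V)) : mwt (e ::ₘ M) = ewt e + mwt M := by
  simp [mwt]

theorem IsBMatching.cons {E M : Multiset (MEdge V)} {b : V → ℕ} {e : MEdge V}
    (hM : IsBMatching E M b) (he : e ∈ E - M) (h₁ : mdeg M e.1 < b e.1)
    (h₂ : mdeg M e.2.1 < b e.2.1) : IsBMatching E (e ::ₘ M) b := by
  refine ⟨?_, fun v => ?_⟩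
  · have := add_le_add (Multiset.singleton_le.2 he) (le_refl M)
    rwa [Multiset.singleton_add, tsub_add_cancel_of_le hM.1] at this
  · rw [mdeg_cons]
    split_ifs with hv
    · rcases hv with rfl | rfl <;> omega
    · exact hM.2 v

theorem IsBMatching.saturated_endpoint_of_max {E M : Multiset (MEdge V)} {b : V → ℕ}
    (hpos : ∀ e ∈ E, 0 < ewt e) (hM : IsBMatching E M b)
    (hmax : ∀ M', IsBMatching E M' b → mwt M' ≤ mwt M) :
    ∀ e ∈ E - M, b e.1 ≤ mdeg M e.1 ∨ b e.2.1 ≤ mdeg M e.2.1 := by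
  intro e he
  by_contra! h
  have := hmax _ (hM.cons he h.1 h.2)
  have := hpos e (Multiset.mem_of_le tsub_le_self he)
  rw [mwt_cons] at *
  omega

section

variable [Fintype V]

theorem sum_mdeg_le_two_mul_card (M : Multiset (MEdge V)) :
    ∑ v, mdeg M v ≤ 2 * M.card := by
  simp only [mdeg]
  rw [Multiset.sum_card_filter_eq_sum_map (p := fun v (e : MEdge V) => e.1 = v ∨ e.2.1 = v)]
  calc _ ≤ (M.map fun _ => 2).sum := Multiset.sum_map_le_sum_map _ _ fun e _ => by
        refine (Finset.card_le_card (t := {e.1, e.2.1}) fun v hv => ?_).trans Finset.card_le_two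
        rcases (Finset.mem_filter.1 hv).2 with rfl | rfl <;> simp
    _ = 2 * M.card := by simp [mul_comm]

theorem mdeg_le_card_mul {E : Multiset (MEdge V)} {b : V → ℕ} {v : V}
    (hpar : ∀ u, (par E v u).card ≤ b v) : mdeg E v ≤ Fintype.card V * b v :=
  calc mdeg E v
      ≤ ∑ u, ((E.filter fun e => e.1 = v ∨ e.2.1 = v).filter
          fun e => (e.1 = v ∧ e.2.1 = u) ∨ (e.1 = u ∧ e.2.1 = v)).card :=
        Multiset.card_le_sum_card_filter fun e he => by
          rcases (Multiset.mem_filter.1 he).2 with h | h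
          · exact ⟨e.2.1, Finset.mem_univ _, Or.inl ⟨h, rfl⟩⟩
          · exact ⟨e.1, Finset.mem_univ _, Or.inr ⟨rfl, h⟩⟩
    _ ≤ ∑ u, (par E v u).card := Finset.sum_le_sum fun u _ =>
        Multiset.card_le_card (Multiset.filter_le_filter _ (Multiset.filter_le _ _))
    _ ≤ ∑ _u : V, b v := Finset.sum_le_sum fun u _ => hpar u
    _ = Fintype.card V * b v := by simp

theorem card_le_of_saturated_cover {E M : Multiset (MEdge V)} {b : V → ℕ} (hME : M ≤ E)
    (hpar : ∀ u v, (par E u v).card ≤ b u)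
    (hcover : ∀ e ∈ E - M, b e.1 ≤ mdeg M e.1 ∨ b e.2.1 ≤ mdeg M e.2.1) :
    E.card ≤ 2 * Fintype.card V * M.card := by
  rcases isEmpty_or_nonempty V with _ | _
  · obtain rfl : E = 0 := Multiset.eq_zero_of_forall_notMem fun e _ => isEmptyElim e.1
    simp
  obtain ⟨m, hm⟩ := Nat.exists_eq_succ_of_ne_zero (Fintype.card_ne_zero (α := V))
  have hsplit : E - M + M = E := tsub_add_cancel_of_le hME
  set S := Finset.univ.filter fun v => b v ≤ mdeg M v
  have hS : ∑ v ∈ S, b v ≤ 2 * M.card :=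
    calc ∑ v ∈ S, b v ≤ ∑ v ∈ S, mdeg M v :=
          Finset.sum_le_sum fun v hv => (Finset.mem_filter.1 hv).2
      _ ≤ ∑ v, mdeg M v := Finset.sum_le_sum_of_subset (Finset.subset_univ S)
      _ ≤ 2 * M.card := sum_mdeg_le_two_mul_card M
  have hlocal : ∀ v ∈ S, mdeg (E - M) v ≤ m * b v := by
    intro v hv
    have hsat := (Finset.mem_filter.1 hv).2
    have hdeg := mdeg_add (E - M) M v
    have hE := mdeg_le_card_mul (hpar v)
    rw [hsplit] at hdeg
    rw [hm, Nat.succ_mul] at hE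
    omega
  have hEM : (E - M).card ≤ m * ∑ v ∈ S, b v :=
    calc (E - M).card ≤ ∑ v ∈ S, mdeg (E - M) v :=
          Multiset.card_le_sum_card_filter fun e he => by
            rcases hcover e he with h | h
            · exact ⟨e.1, Finset.mem_filter.2 ⟨Finset.mem_univ _, h⟩, Or.inl rfl⟩
            · exact ⟨e.2.1, Finset.mem_filter.2 ⟨Finset.mem_univ _, h⟩, Or.inr rfl⟩
      _ ≤ ∑ v ∈ S, m * b v := Finset.sum_le_sum hlocal
      _ = m * ∑ v ∈ S, b v := (Finset.mul_sum _ _ _).symm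
  calc E.card = (E - M).card + M.card := by rw [← Multiset.card_add, hsplit]
    _ ≤ 2 * Fintype.card V * M.card := by rw [hm]; nlinarith [Nat.mul_le_mul_left m hS]

end

theorem edge_count_bound_general
    {V : Type*} [Fintype V]
    (W : ℕ)
    (E : Multiset (MEdge V)) (hE : ValidEdges W E)
    (b : V → ℕ)
    (hpar : ∀ u v : V, (par E u v).card ≤ min (b u) (b v))
    (M : Multiset (MEdge V)) (hM : IsBMatching E M b)
    (hmax : ∀ M', IsBMatching E M' b → mwt M' ≤ mwt M) :
    Multiset.card E ≤ 2 * Fintype.card V * Multiset.card M :=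
  card_le_of_saturated_cover hM.1 (fun u v => (hpar u v).trans (min_le_left _ _))
    (hM.saturated_endpoint_of_max (fun e he => (hE e he).2.1) hmax)

/-- If the number of parallel edges between any two vertices is at
most `min(b_u, b_v)`, then the total number of edges satisfies `|E| ≤ 2n·|M_G|`,
where `M_G` is a maximum-weight `b`-matching and `n` the number of vertices. -/
theorem edge_count_bound
    {V : Type*} [Fintype V]
    (W : ℕ)
    (E : Multiset (MEdge V)) (hE : ValidEdges W E)
    (b : V → ℕ) (hb : ∀ v, 1 ≤ b v)
    (hpar : ∀ u v : V, (par E u v).card ≤ min (b u) (b v))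
    (M : Multiset (MEdge V)) (hM : IsBMatching E M b)
    (hmax : ∀ M', IsBMatching E M' b → mwt M' ≤ mwt M) :
    Multiset.card E ≤ 2 * Fintype.card V * Multiset.card M :=
  edge_count_bound_general W E hE b hpar M hM hmax
end

section
/- Let 0 < ε < 1/2 and let W ≥ 1 be an integer. Let G = (V,E) be a weighted multigraph with m edges, integer edge weights in {1,...,W}, and capacities {b_v}, and let M_G be a maximum-weight b-matching satisfying w(M_G) ≥ (3W²/(2ε²))·log(m). Choose a uniformly random ordering of the m edges, let E^early be the set of the first ⌊εm⌋ edges and E^late the remaining edges. Then with probability at least 1 − m⁻³, the total weight of the edges of M_G lying in E^early is at most 2ε·w(M_G); in particular, with probability at least 1 − m⁻³, the subgraph E^late contains a b-matching of weight at least (1 − 2ε)·w(M_G). -/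
open scoped Classical

variable {V : Type*}

/-!
The weight `X` of the early part of `M_G` is a sum over a uniformly random `⌊εm⌋`-subset of
positions, and its exponential moment is at most the one for independent Bernoulli(`ε`)
sampling: expanding `∏ (1 + (e^{t wᵢ} - 1) [i early])` over subsets `R`, each `R` lies in the
early set for at most an `ε^|R|` fraction of the orderings. By Hoeffding's lemma for a
Bernoulli variable, `E e^{tX} ≤ exp (t ε w(M_G) + t² W w(M_G) / 8)`, and Markov's inequality
with `t = 4ε/W` bounds the probability that `X` exceeds `2ε w(M_G)` by
`exp (-2ε² w(M_G) / W) ≤ m⁻³`. On the complementary event the late edges of `M_G` form a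
`b`-matching of weight at least `(1 - 2ε) w(M_G)`.
-/

section

open Finset Equiv Nat Real ProbabilityTheory MeasureTheory
open scoped Pointwise

theorem one_add_mul_exp_sub_one_le {p : ℝ} (hp₀ : 0 ≤ p) (hp₁ : p ≤ 1) (t : ℝ) :
    1 + p * (exp t - 1) ≤ exp (p * t + t ^ 2 / 8) := by
  set μ : Measure Bool := Ber(true, false, ⟨p, hp₀, hp₁⟩)
  set X : Bool → ℝ := fun b => if b then 1 else 0
  have hmean : μ[X] = p := by simp [μ, X, integral_bernoulliMeasure]
  have hoeffding := (hasSubgaussianMGF_of_mem_Icc (a := 0) (b := 1) (μ := μ)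
    (measurable_of_finite X).aemeasurable (ae_of_all _ fun b => by cases b <;> simp [X])).mgf_le t
  simp only [mgf, hmean, μ, X, integral_bernoulliMeasure] at hoeffding
  norm_num at hoeffding
  calc 1 + p * (exp t - 1)
      = exp (p * t) * (p * exp (t * (1 - p)) + (1 - p) * exp (-(t * p))) := by
        have h₁ : exp (p * t) * exp (t * (1 - p)) = exp t := by rw [← exp_add]; ring_nf
        have h₂ : exp (p * t) * exp (-(t * p)) = 1 := by rw [← exp_add]; ring_nf; exact exp_zero
        linear_combination (-p) * h₁ - (1 - p) * h₂
    _ ≤ exp (p * t) * exp (1 / 4 * t ^ 2 / 2) := by gcongr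
    _ = exp (p * t + t ^ 2 / 8) := by rw [← exp_add]; ring_nf

theorem descFactorial_le_pow_mul_descFactorial {ε : ℝ} (hε₀ : 0 ≤ ε) (hε₁ : ε ≤ 1) {k n : ℕ}
    (hk : (k : ℝ) ≤ ε * n) (r : ℕ) :
    (k.descFactorial r : ℝ) ≤ ε ^ r * n.descFactorial r := by
  have hkn : (k : ℝ) ≤ n := hk.trans (by nlinarith [(n.cast_nonneg : (0 : ℝ) ≤ n)])
  rw [descFactorial_eq_prod_range, descFactorial_eq_prod_range, cast_prod, cast_prod,
    pow_eq_prod_const, ← prod_mul_distrib]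
  refine prod_le_prod (fun _ _ => by positivity) fun i _ => ?_
  rcases lt_or_ge i k with hik | hki
  · have hik' : (i : ℝ) ≤ k := by exact_mod_cast hik.le
    rw [cast_sub hik.le, cast_sub (by exact_mod_cast hik'.trans hkn)]
    nlinarith
  · rw [Nat.sub_eq_zero_of_le hki, cast_zero]
    positivity

section SamplingWithoutReplacement

variable {α : Type*} [Fintype α] [DecidableEq α]

theorem card_filter_powersetCard_superset_le {ε : ℝ} (hε₀ : 0 ≤ ε) (hε₁ : ε ≤ 1) {k : ℕ}
    (hk : (k : ℝ) ≤ ε * Fintype.card α) (R : Finset α) :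
    (#{U ∈ powersetCard k univ | R ⊆ U} : ℝ) ≤ ε ^ #R * (Fintype.card α).choose k := by
  set n := Fintype.card α
  rcases le_or_gt #R k with hRk | hkR
  · have hkn : k ≤ n := by
      have : (k : ℝ) ≤ n := hk.trans (by nlinarith [(n.cast_nonneg : (0 : ℝ) ≤ n)])
      exact_mod_cast this
    have hchoose : (k.choose #R : ℝ) ≤ ε ^ #R * n.choose #R := by
      have := descFactorial_le_pow_mul_descFactorial hε₀ hε₁ hk #R
      rw [descFactorial_eq_factorial_mul_choose, descFactorial_eq_factorial_mul_choose, cast_mul,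
        cast_mul, mul_left_comm] at this
      exact le_of_mul_le_mul_left this (by positivity)
    have hmul : (n.choose k * k.choose #R : ℝ) = n.choose #R * (n - #R).choose (k - #R) := by
      exact_mod_cast choose_mul hRk
    rw [card_filter_powersetCard_subset R univ k (subset_univ R) hRk, Finset.card_univ]
    refine le_of_mul_le_mul_left ?_ (by exact_mod_cast choose_pos (hRk.trans hkn) :
      (0 : ℝ) < n.choose #R)
    calc (n.choose #R : ℝ) * (n - #R).choose (k - #R) = n.choose k * k.choose #R := hmul.symm
      _ ≤ n.choose k * (ε ^ #R * n.choose #R) := by gcongr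
      _ = n.choose #R * (ε ^ #R * n.choose k) := by ring
  · rw [filter_false_of_mem fun U hU hRU => ?_]
    · simp only [card_empty, cast_zero]; positivity
    · have := card_le_card hRU
      rw [(mem_powersetCard.mp hU).2] at this
      omega

theorem sum_powersetCard_prod_ite_le {ε : ℝ} (hε₀ : 0 ≤ ε) (hε₁ : ε ≤ 1) {k : ℕ}
    (hk : (k : ℝ) ≤ ε * Fintype.card α) (A : Finset α) {a : α → ℝ} (ha : ∀ i ∈ A, 1 ≤ a i) :
    ∑ U ∈ powersetCard k univ, ∏ i ∈ A, (if i ∈ U then a i else 1) ≤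
      (Fintype.card α).choose k * ∏ i ∈ A, (1 + ε * (a i - 1)) := by
  have hexpand : ∀ U : Finset α, ∏ i ∈ A, (if i ∈ U then a i else 1) =
      ∑ R ∈ A.powerset, if R ⊆ U then ∏ i ∈ R, (a i - 1) else 0 := by
    intro U
    calc ∏ i ∈ A, (if i ∈ U then a i else 1)
        = ∏ i ∈ A, (1 + if i ∈ U then a i - 1 else 0) :=
          prod_congr rfl fun i _ => by split_ifs <;> ring
      _ = ∑ R ∈ A.powerset, ∏ i ∈ R, (if i ∈ U then a i - 1 else 0) := prod_one_add A
      _ = _ := sum_congr rfl fun R _ => prod_ite_zero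
  calc ∑ U ∈ powersetCard k univ, ∏ i ∈ A, (if i ∈ U then a i else 1)
      = ∑ R ∈ A.powerset, #{U ∈ powersetCard k univ | R ⊆ U} * ∏ i ∈ R, (a i - 1) := by
        simp_rw [hexpand]
        rw [sum_comm]
        refine sum_congr rfl fun R _ => ?_
        rw [← sum_filter, sum_const, nsmul_eq_mul]
    _ ≤ ∑ R ∈ A.powerset, ε ^ #R * (Fintype.card α).choose k * ∏ i ∈ R, (a i - 1) := by
        refine sum_le_sum fun R hR => mul_le_mul_of_nonneg_right
          (card_filter_powersetCard_superset_le hε₀ hε₁ hk R) ?_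
        exact prod_nonneg fun i hi => sub_nonneg.mpr (ha i (mem_powerset.mp hR hi))
    _ = (Fintype.card α).choose k * ∏ i ∈ A, (1 + ε * (a i - 1)) := by
        rw [prod_one_add, mul_sum]
        refine sum_congr rfl fun R _ => ?_
        rw [prod_mul_distrib, prod_const]
        ring

theorem choose_card_nsmul_sum_perm_smul {M : Type*} [AddCommMonoid M] (T : Finset α)
    (F : Finset α → M) :
    (Fintype.card α).choose #T • ∑ σ : Perm α, F (σ • T) =
      (Fintype.card α)! • ∑ U ∈ powersetCard #T univ, F U := by
  have hmaps : ∀ σ ∈ (univ : Finset (Perm α)), σ • T ∈ powersetCard #T univ := by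
    simp [card_smul_finset]
  have hfiber : ∀ U ∈ powersetCard #T univ,
      #{σ : Perm α | σ • T = U} = #{σ : Perm α | σ • T = T} := by
    intro U hU
    have := Set.powersetCard.isPretransitive (α := α) (n := #T)
    obtain ⟨τ, hτ⟩ := MulAction.exists_smul_eq (Perm α)
      (⟨T, rfl⟩ : Set.powersetCard α #T) ⟨U, (mem_powersetCard.mp hU).2⟩
    replace hτ : τ • T = U := congrArg Subtype.val hτ
    refine card_bij' (fun σ _ => τ⁻¹ * σ) (fun σ _ => τ * σ) ?_ ?_ ?_ ?_ <;>
      simp_all [mul_smul, inv_smul_eq_iff]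
  set c := #{σ : Perm α | σ • T = T}
  have hsum : ∑ σ : Perm α, F (σ • T) = c • ∑ U ∈ powersetCard #T univ, F U := by
    rw [← sum_fiberwise_of_maps_to hmaps, smul_sum]
    refine sum_congr rfl fun U hU => ?_
    rw [sum_congr rfl fun σ hσ => congrArg F (mem_filter.mp hσ).2, sum_const, hfiber U hU]
  have hcard : (Fintype.card α)! = (Fintype.card α).choose #T * c := by
    rw [← Fintype.card_perm, ← Finset.card_univ, card_eq_sum_card_fiberwise hmaps,
      sum_congr rfl hfiber, sum_const, card_powersetCard, Finset.card_univ, smul_eq_mul]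
  rw [hsum, hcard, smul_smul, mul_comm]

theorem sum_perm_prod_ite_le {ε : ℝ} (hε₀ : 0 ≤ ε) (hε₁ : ε ≤ 1) (T : Finset α)
    (hT : (#T : ℝ) ≤ ε * Fintype.card α) (A : Finset α) {a : α → ℝ} (ha : ∀ i ∈ A, 1 ≤ a i) :
    ∑ σ : Perm α, ∏ i ∈ A, (if σ i ∈ T then a i else 1) ≤
      (Fintype.card α)! * ∏ i ∈ A, (1 + ε * (a i - 1)) := by
  set F : Finset α → ℝ := fun U => ∏ i ∈ A, (if i ∈ U then a i else 1)
  have hsmul : ∑ σ : Perm α, ∏ i ∈ A, (if σ i ∈ T then a i else 1) = ∑ σ : Perm α, F (σ • T) := by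
    refine Fintype.sum_bijective (·⁻¹) inv_involutive.bijective _ _ fun σ => ?_
    simp only [F, mem_inv_smul_finset_iff, Perm.smul_def]
  have hpos : (0 : ℝ) < (Fintype.card α).choose #T := by exact_mod_cast choose_pos (card_le_univ T)
  have key := choose_card_nsmul_sum_perm_smul T F
  rw [nsmul_eq_mul, nsmul_eq_mul] at key
  refine le_of_mul_le_mul_left ?_ hpos
  calc _ = ((Fintype.card α)! : ℝ) * ∑ U ∈ powersetCard #T univ, F U := by rw [hsmul, key]
    _ ≤ (Fintype.card α)! * ((Fintype.card α).choose #T * ∏ i ∈ A, (1 + ε * (a i - 1))) := by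
        gcongr
        exact sum_powersetCard_prod_ite_le hε₀ hε₁ hT A ha
    _ = _ := by ring

theorem card_perm_sum_mem_ge_le {ε δ W : ℝ} (hε₀ : 0 ≤ ε) (hε₁ : ε ≤ 1) (hδ : 0 ≤ δ) (hW : 0 < W)
    (T : Finset α) (hT : (#T : ℝ) ≤ ε * Fintype.card α) (A : Finset α) {w : α → ℝ}
    (hw : ∀ i ∈ A, 0 ≤ w i ∧ w i ≤ W) :
    (#{σ : Perm α | (ε + δ) * ∑ i ∈ A, w i ≤ ∑ i ∈ A with σ i ∈ T, w i} : ℝ) ≤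
      (Fintype.card α)! * exp (-2 * δ ^ 2 * (∑ i ∈ A, w i) / W) := by
  set wS := ∑ i ∈ A, w i
  set t := 4 * δ / W
  have ht : 0 ≤ t := by positivity
  have htw : ∀ i ∈ A, 0 ≤ t * w i := fun i hi => mul_nonneg ht (hw i hi).1
  have hmgf : ∑ σ : Perm α, exp (t * ∑ i ∈ A with σ i ∈ T, w i) ≤
      (Fintype.card α)! * ∏ i ∈ A, (1 + ε * (exp (t * w i) - 1)) := by
    convert sum_perm_prod_ite_le hε₀ hε₁ T hT A (a := fun i => exp (t * w i))
      (fun i hi => one_le_exp (htw i hi)) using 2 with σ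
    rw [mul_sum, exp_sum, prod_filter]
  have hfactor : ∀ i ∈ A, 1 + ε * (exp (t * w i) - 1) ≤ exp (w i * (ε * t + t ^ 2 * W / 8)) :=
    fun i hi => (one_add_mul_exp_sub_one_le hε₀ hε₁ _).trans <| exp_le_exp.mpr <| by
      nlinarith [mul_le_mul_of_nonneg_left (hw i hi).2 (mul_nonneg (sq_nonneg t) (hw i hi).1)]
  have hprod : ∏ i ∈ A, (1 + ε * (exp (t * w i) - 1)) ≤ exp (wS * (ε * t + t ^ 2 * W / 8)) := by
    rw [sum_mul, exp_sum]
    refine prod_le_prod (fun i hi => ?_) hfactor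
    nlinarith [one_le_exp (htw i hi)]
  have hmarkov : #{σ : Perm α | (ε + δ) * wS ≤ ∑ i ∈ A with σ i ∈ T, w i} *
      exp (t * ((ε + δ) * wS)) ≤ ∑ σ : Perm α, exp (t * ∑ i ∈ A with σ i ∈ T, w i) := by
    rw [← nsmul_eq_mul]
    refine (card_nsmul_le_sum _ _ _ fun σ hσ => ?_).trans
      (sum_le_sum_of_subset_of_nonneg (subset_univ _) fun _ _ _ => (exp_pos _).le)
    exact exp_le_exp.mpr (mul_le_mul_of_nonneg_left (mem_filter.mp hσ).2 ht)
  have hexponent : wS * (ε * t + t ^ 2 * W / 8) - t * ((ε + δ) * wS) = -2 * δ ^ 2 * wS / W := by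
    simp only [t]
    field_simp
    ring
  rw [← hexponent, exp_sub, ← mul_div_assoc, le_div_iff₀ (exp_pos _)]
  exact hmarkov.trans (hmgf.trans (by gcongr))

end SamplingWithoutReplacement

theorem card_perm_early_sum_le_two_mul_ge {m : ℕ} {ε W : ℝ} (hε₀ : 0 < ε) (hε₁ : ε ≤ 1) (hW : 1 ≤ W)
    (A : Finset (Fin m)) {w : Fin m → ℝ} (hw : ∀ i ∈ A, 0 ≤ w i ∧ w i ≤ W)
    (hbig : 3 * W ^ 2 / (2 * ε ^ 2) * Real.log m ≤ ∑ i ∈ A, w i) :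
    (1 - ((m : ℝ) ^ 3)⁻¹) * Fintype.card (Perm (Fin m)) ≤
      #{σ : Perm (Fin m) | ∑ i ∈ A with (σ i : ℕ) < ⌊ε * m⌋₊, w i ≤ 2 * ε * ∑ i ∈ A, w i} := by
  rcases m.eq_zero_or_pos with rfl | hm
  · simp [eq_empty_of_isEmpty A]
  set wS := ∑ i ∈ A, w i
  set T : Finset (Fin m) := {j | (j : ℕ) < ⌊ε * m⌋₊}
  have hT : (#T : ℝ) ≤ ε * Fintype.card (Fin m) := by
    rw [Fintype.card_fin]
    refine le_trans ?_ (Nat.floor_le (by positivity))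
    exact_mod_cast Fin.card_filter_val_lt.trans_le (min_le_right _ _)
  have hbad := card_perm_sum_mem_ge_le hε₀.le hε₁ hε₀.le (by linarith) T hT A hw
  have htail : exp (-2 * ε ^ 2 * wS / W) ≤ ((m : ℝ) ^ 3)⁻¹ := by
    have hlog : 0 ≤ Real.log m := Real.log_nonneg (by exact_mod_cast hm)
    rw [← exp_log (by positivity : (0 : ℝ) < ((m : ℝ) ^ 3)⁻¹), Real.log_inv, Real.log_pow,
      exp_le_exp, div_le_iff₀ (by linarith), cast_ofNat]
    rw [div_mul_eq_mul_div, div_le_iff₀ (by positivity)] at hbig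
    nlinarith [mul_le_mul_of_nonneg_left hW (mul_nonneg hlog (by linarith : (0 : ℝ) ≤ W))]
  have hsplit := card_filter_add_card_filter_not (s := (univ : Finset (Perm (Fin m))))
    (p := fun σ => ∑ i ∈ A with (σ i : ℕ) < ⌊ε * m⌋₊, w i ≤ 2 * ε * wS)
  have hsub : #{σ : Perm (Fin m) | ¬ ∑ i ∈ A with (σ i : ℕ) < ⌊ε * m⌋₊, w i ≤ 2 * ε * wS} ≤
      #{σ : Perm (Fin m) | (ε + ε) * wS ≤ ∑ i ∈ A with σ i ∈ T, w i} := by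
    refine card_le_card (monotone_filter_right _ fun σ _ hσ => ?_)
    simp only [T, mem_filter, mem_univ, true_and]
    linarith [not_le.mp hσ]
  rw [Finset.card_univ, ← Nat.cast_inj (R := ℝ), Nat.cast_add] at hsplit
  rw [Fintype.card_perm] at hsplit ⊢
  have hsubR : (_ : ℝ) ≤ _ := Nat.cast_le.mpr hsub
  linarith [hbad.trans (mul_le_mul_of_nonneg_left htail (by positivity : (0 : ℝ) ≤ _))]

theorem mwt_map {ι : Type*} (s : Finset ι) (f : ι → MEdge V) :
    mwt (s.val.map f) = ∑ i ∈ s, ewt (f i) := by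
  rw [mwt, Multiset.map_map]
  rfl

theorem mdeg_mono {M M' : Multiset (MEdge V)} (h : M ≤ M') (v : V) : mdeg M v ≤ mdeg M' v :=
  Multiset.card_le_card (Multiset.filter_le_filter _ h)

theorem IsBMatching.exists_filter_weight_ge {ι : Type*} [Fintype ι] {edges : ι → MEdge V}
    {MI : Finset ι} {b : V → ℕ} (hM : IsBMatching (univ.val.map edges) (MI.val.map edges) b)
    (p : ι → Prop) [DecidablePred p] {B : ℝ}
    (hB : ∑ i ∈ MI with ¬ p i, (ewt (edges i) : ℝ) ≤ B) :
    ∃ M, IsBMatching ((univ.filter p).val.map edges) M b ∧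
      (mwt (MI.val.map edges) : ℝ) - B ≤ mwt M := by
  refine ⟨(MI.filter p).val.map edges, ⟨?_, fun v => ?_⟩, ?_⟩
  · exact Multiset.map_le_map (val_le_iff.mpr (filter_subset_filter p (subset_univ MI)))
  · exact (mdeg_mono (Multiset.map_le_map (val_le_iff.mpr (filter_subset p MI))) v).trans (hM.2 v)
  · rw [mwt_map, mwt_map, ← sum_filter_add_sum_filter_not MI p]
    push_cast
    linarith

end

/-- Edge `i` arrives at position `σ i`; probabilities are counted over all permutations `σ`. -/
theorem early_stream_loses_little_general
    {V : Type*}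
    (ε : ℝ) (hε0 : 0 < ε) (hε1 : ε < 1/2)
    (W : ℕ) (hW : 1 ≤ W)
    (m : ℕ) (edges : Fin m → MEdge V)
    (hE : ValidEdges W (Multiset.map edges Finset.univ.val))
    (b : V → ℕ)
    (MI : Finset (Fin m))
    (hM : IsBMatching (Multiset.map edges Finset.univ.val) (MI.val.map edges) b)
    (hbig : 3 * (W : ℝ)^2 / (2 * ε^2) * Real.log m ≤ (mwt (MI.val.map edges) : ℝ)) :
    (1 - ((m : ℝ)^3)⁻¹) * (Fintype.card (Equiv.Perm (Fin m))) ≤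
      ((Finset.univ.filter (fun σ : Equiv.Perm (Fin m) =>
        (∑ i ∈ MI.filter (fun i => (σ i : ℕ) < Nat.floor (ε * m)),
            (ewt (edges i) : ℝ)) ≤
          2 * ε * (mwt (MI.val.map edges) : ℝ))).card : ℝ) ∧
    (1 - ((m : ℝ)^3)⁻¹) * (Fintype.card (Equiv.Perm (Fin m))) ≤
      ((Finset.univ.filter (fun σ : Equiv.Perm (Fin m) =>
        ∃ M, IsBMatching
            (Multiset.map edges
              (Finset.univ.filter (fun i : Fin m => Nat.floor (ε * m) ≤ (σ i : ℕ))).val)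
            M b ∧
          (1 - 2 * ε) * (mwt (MI.val.map edges) : ℝ) ≤ (mwt M : ℝ))).card : ℝ) := by
  have hw : ∀ i ∈ MI, 0 ≤ (ewt (edges i) : ℝ) ∧ (ewt (edges i) : ℝ) ≤ W := fun i _ =>
    ⟨Nat.cast_nonneg _, Nat.cast_le.mpr (hE _ (Multiset.mem_map_of_mem _ (Finset.mem_univ i))).2.2⟩
  have hgood := card_perm_early_sum_le_two_mul_ge hε0 (by linarith) (by exact_mod_cast hW) MI hw
    (by rwa [mwt_map, Nat.cast_sum] at hbig)
  rw [← Nat.cast_sum, ← mwt_map] at hgood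
  refine ⟨hgood, hgood.trans (Nat.cast_le.mpr (Finset.card_le_card fun σ hσ => ?_))⟩
  simp only [Finset.mem_filter, Finset.mem_univ, true_and] at hσ ⊢
  obtain ⟨M, hMσ, hwM⟩ := hM.exists_filter_weight_ge (fun i => ⌊ε * m⌋₊ ≤ (σ i : ℕ))
    (B := 2 * ε * mwt (MI.val.map edges)) (by simpa only [not_le] using hσ)
  exact ⟨M, hMσ, by linarith⟩

/-- Let `G` be a weighted multigraph with `m` edges (given as a
stream `edges : Fin m → MEdge V`), and let `M_G` (given by its index set `MI`) be a
maximum-weight `b`-matching with `w(M_G) ≥ (3W²/(2ε²))·log m`. For a uniformly random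
ordering `σ` of the edges (edge `i` arrives at position `σ i`), with probability at
least `1 - m⁻³` the weight of the edges of `M_G` among the first `⌊εm⌋` edges is at
most `2ε·w(M_G)`; in particular, with probability at least `1 - m⁻³` the remaining
(late) edges contain a `b`-matching of weight at least `(1 - 2ε)·w(M_G)`.
Probabilities are expressed by counting permutations. -/
theorem early_stream_loses_little
    {V : Type*} [Fintype V]
    (ε : ℝ) (hε0 : 0 < ε) (hε1 : ε < 1/2)
    (W : ℕ) (hW : 1 ≤ W)
    (m : ℕ) (edges : Fin m → MEdge V)
    (hE : ValidEdges W (Multiset.map edges Finset.univ.val))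
    (b : V → ℕ) (hb : ∀ v, 1 ≤ b v)
    (MI : Finset (Fin m))
    (hM : IsBMatching (Multiset.map edges Finset.univ.val) (MI.val.map edges) b)
    (hmax : ∀ M', IsBMatching (Multiset.map edges Finset.univ.val) M' b →
      mwt M' ≤ mwt (MI.val.map edges))
    (hbig : 3 * (W : ℝ)^2 / (2 * ε^2) * Real.log m ≤ (mwt (MI.val.map edges) : ℝ)) :
    (1 - ((m : ℝ)^3)⁻¹) * (Fintype.card (Equiv.Perm (Fin m))) ≤
      ((Finset.univ.filter (fun σ : Equiv.Perm (Fin m) =>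
        (∑ i ∈ MI.filter (fun i => (σ i : ℕ) < Nat.floor (ε * m)),
            (ewt (edges i) : ℝ)) ≤
          2 * ε * (mwt (MI.val.map edges) : ℝ))).card : ℝ) ∧
    (1 - ((m : ℝ)^3)⁻¹) * (Fintype.card (Equiv.Perm (Fin m))) ≤
      ((Finset.univ.filter (fun σ : Equiv.Perm (Fin m) =>
        ∃ M, IsBMatching
            (Multiset.map edges
              (Finset.univ.filter (fun i : Fin m => Nat.floor (ε * m) ≤ (σ i : ℕ))).val)
            M b ∧
          (1 - 2 * ε) * (mwt (MI.val.map edges) : ℝ) ≤ (mwt M : ℝ))).card : ℝ) :=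
  early_stream_loses_little_general ε hε0 hε1 W hW m edges hE b MI hM hbig
end
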